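/- arXiv:1501.03363 — 2 statements merged into one kernel-verified Lean document; each statement's English description precedes it below -/
import Mathlib

section
/- Assume the rational-parameter setup and additionally that ∑_{m=1}^{M⁺} M_m = ∑_{k=1}^{m⁺} m_k and ∑_{n=1}^{N⁻} N_n = ∑_{k=1}^{n⁻} n_k. Let H⁰_{mi} ∈ ℂ (1 ≤ m ≤ M⁺, 1 ≤ i ≤ M_m) and G⁰_{ni} ∈ ℂ (1 ≤ n ≤ N⁻, 1 ≤ i ≤ N_n) be such that for every x ∈ ℂ ∖ ({0} ∪ {β₁,…,β_{M⁺}} ∪ {−γ₁,…,−γ_{N⁻}}) one has ∑_{m=1}^{M⁺} ∑_{i=1}^{M_m} H⁰_{mi}·(−1)^i/(x−β_m)^i + ∑_{n=1}^{N⁻} ∑_{i=1}^{N_n} G⁰_{ni}/(x+γ_n)^i + 1/x = f⁰(x), where f⁰(x) = [∏_{m=1}^{M⁺}(−β_m)^{M_m}·∏_{n=1}^{N⁻}γ_n^{N_n}·∏_{k=1}^{m⁺}(x−η_k)^{m_k}·∏_{k=1}^{n⁻}(x+ϑ_k)^{n_k}] / [∏_{k=1}^{m⁺}(−η_k)^{m_k}·∏_{k=1}^{n⁻}ϑ_k^{n_k}·x·∏_{m=1}^{M⁺}(x−β_m)^{M_m}·∏_{n=1}^{N⁻}(x+γ_n)^{N_n}].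 Then ∑_{m=1}^{M⁺} H⁰_{m1} − 1 − ∑_{n=1}^{N⁻} G⁰_{n1} = −∏_{m=1}^{M⁺}β_m^{M_m}·∏_{n=1}^{N⁻}γ_n^{N_n} / (∏_{k=1}^{m⁺}η_k^{m_k}·∏_{k=1}^{n⁻}ϑ_k^{n_k}). -/
/-!
Multiply both sides of the partial-fraction identity by `x` and let `x → ∞`. On the left,
`x · c / (x - a)^i` tends to `c` for `i = 1` and to `0` for `i ≥ 2`, so only the residues
`-H⁰_{m1}`, `G⁰_{n1}` and the `1` from `1/x` survive. On the right, numerator and denominator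
of `f⁰` have the same degree once `x` is cancelled, so `x · f⁰(x)` tends to the ratio of the
constant factors; the signs of `∏ (-β)^M` and `∏ (-η)^m` cancel because `∑ M = ∑ m`.
-/

open Finset Filter Topology Bornology

section Cobounded

variable {𝕜 : Type*} [NormedField 𝕜]

lemma tendsto_sub_div_self_cobounded (a : 𝕜) :
    Tendsto (fun x => (x - a) / x) (cobounded 𝕜) (𝓝 1) := by
  have h : Tendsto (fun x : 𝕜 => 1 - a * x⁻¹) (cobounded 𝕜) (𝓝 (1 - a * 0)) :=
    tendsto_const_nhds.sub (tendsto_inv₀_cobounded.const_mul a)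
  rw [mul_zero, sub_zero] at h
  refine h.congr' ?_
  filter_upwards [eventually_ne_cobounded 0] with x hx
  field_simp

lemma tendsto_div_sub_pow_cobounded (a : 𝕜) {i : ℕ} (hi : 1 ≤ i) :
    Tendsto (fun x => x / (x - a) ^ i) (cobounded 𝕜) (𝓝 (if i = 1 then 1 else 0)) := by
  obtain ⟨j, rfl⟩ := Nat.exists_eq_add_of_le' hi
  have hfactor : ∀ x : 𝕜, x / (x - a) ^ (j + 1) = ((x - a) / x)⁻¹ * (x - a)⁻¹ ^ j := by
    intro x
    rw [inv_div, inv_pow, ← div_eq_mul_inv, div_div, ← pow_succ']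
  have hlim := ((tendsto_sub_div_self_cobounded a).inv₀ one_ne_zero).mul
    ((tendsto_inv₀_cobounded.comp (tendsto_sub_const_cobounded a)).pow j)
  simp only [Function.comp_def, ← hfactor, inv_one, one_mul] at hlim
  rcases j with _ | j <;> simpa using hlim

lemma tendsto_mul_sum_Icc_div_sub_pow_cobounded (a : 𝕜) (c : ℕ → 𝕜) {K : ℕ}
    (hK : 1 ≤ K) :
    Tendsto (fun x => x * ∑ i ∈ Icc 1 K, c i / (x - a) ^ i) (cobounded 𝕜) (𝓝 (c 1)) := by
  have hlim := tendsto_finsetSum (Icc 1 K) fun i hi =>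
    (tendsto_div_sub_pow_cobounded a (mem_Icc.mp hi).1).const_mul (c i)
  simp only [mul_ite, mul_one, mul_zero, sum_ite_eq', mem_Icc, le_refl, hK, and_self,
    if_true] at hlim
  refine hlim.congr fun x => ?_
  rw [mul_sum]
  exact sum_congr rfl fun i _ => by ring

lemma tendsto_mul_sum_sum_Icc_div_sub_pow_cobounded {ι : Type*} (s : Finset ι) (a : ι → 𝕜)
    (c : ι → ℕ → 𝕜) {K : ι → ℕ} (hK : ∀ k, 1 ≤ K k) :
    Tendsto (fun x => x * ∑ k ∈ s, ∑ i ∈ Icc 1 (K k), c k i / (x - a k) ^ i)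
      (cobounded 𝕜) (𝓝 (∑ k ∈ s, c k 1)) := by
  simp only [mul_sum]
  exact tendsto_finsetSum s fun k _ => by
    simpa only [mul_sum] using tendsto_mul_sum_Icc_div_sub_pow_cobounded (a k) (c k) (hK k)

lemma tendsto_prod_sub_pow_div_pow_cobounded {ι : Type*} (s : Finset ι) (a : ι → 𝕜)
    (e : ι → ℕ) :
    Tendsto (fun x => (∏ k ∈ s, (x - a k) ^ e k) / x ^ ∑ k ∈ s, e k)
      (cobounded 𝕜) (𝓝 1) := by
  have hlim := tendsto_finsetProd s fun k _ => (tendsto_sub_div_self_cobounded (a k)).pow (e k)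
  simpa only [one_pow, prod_const_one, div_pow, prod_div_distrib, prod_pow_eq_pow_sum]
    using hlim

lemma tendsto_prod_mul_prod_div_pow_cobounded {ι κ : Type*} (s : Finset ι) (t : Finset κ)
    (a : ι → 𝕜) (e : ι → ℕ) (b : κ → 𝕜) (f : κ → ℕ) :
    Tendsto (fun x => (∏ k ∈ s, (x - a k) ^ e k) * (∏ k ∈ t, (x + b k) ^ f k) /
      x ^ (∑ k ∈ s, e k + ∑ k ∈ t, f k)) (cobounded 𝕜) (𝓝 1) := by
  have hlim := (tendsto_prod_sub_pow_div_pow_cobounded s a e).mul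
    (tendsto_prod_sub_pow_div_pow_cobounded t (-b) f)
  simpa only [Pi.neg_apply, sub_neg_eq_add, mul_one, ← mul_div_mul_comm, ← pow_add]
    using hlim

lemma tendsto_mul_mul_div_mul_mul_cobounded {p q : 𝕜 → 𝕜} {d : ℕ} (A B : 𝕜)
    (hp : Tendsto (fun x => p x / x ^ d) (cobounded 𝕜) (𝓝 1))
    (hq : Tendsto (fun x => q x / x ^ d) (cobounded 𝕜) (𝓝 1)) :
    Tendsto (fun x => x * (A * p x / (B * x * q x))) (cobounded 𝕜) (𝓝 (A / B)) := by
  have hlim := (hp.div hq one_ne_zero).const_mul (A / B)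
  rw [div_one, mul_one] at hlim
  refine hlim.congr' ?_
  filter_upwards [eventually_ne_cobounded 0] with x hx
  rw [Pi.div_apply, div_div_div_cancel_right₀ (pow_ne_zero d hx)]
  field_simp

end Cobounded

lemma prod_neg_pow {ι M : Type*} [CommMonoid M] [HasDistribNeg M] (s : Finset ι)
    (a : ι → M) (e : ι → ℕ) :
    ∏ k ∈ s, (-a k) ^ e k = (-1) ^ (∑ k ∈ s, e k) * ∏ k ∈ s, a k ^ e k := by
  rw [← prod_pow_eq_pow_sum, ← prod_mul_distrib]
  exact prod_congr rfl fun k _ => neg_pow (a k) (e k)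

theorem paper_eq_3_39_general (Mp Nm mp nm : ℕ)
    (β : Fin Mp → ℂ) (M : Fin Mp → ℕ)
    (γ : Fin Nm → ℂ) (N : Fin Nm → ℕ)
    (η : Fin mp → ℂ) (m : Fin mp → ℕ)
    (ϑ : Fin nm → ℂ) (n : Fin nm → ℕ)
    (hM : ∀ k, 1 ≤ M k) (hN : ∀ k, 1 ≤ N k)
    (hdegM : ∑ k, M k = ∑ k, m k) (hdegN : ∑ k, N k = ∑ k, n k)
    (H0 : Fin Mp → ℕ → ℂ) (G0 : Fin Nm → ℕ → ℂ)
    (hpf : ∀ x : ℂ, x ≠ 0 → (∀ mm, x ≠ β mm) → (∀ nn, x ≠ -γ nn) →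
      ∑ mm, ∑ i ∈ Finset.Icc 1 (M mm), H0 mm i * (-1) ^ i / (x - β mm) ^ i
        + ∑ nn, ∑ i ∈ Finset.Icc 1 (N nn), G0 nn i / (x + γ nn) ^ i
        + 1 / x
      = ((∏ mm, (-β mm) ^ M mm) * (∏ nn, γ nn ^ N nn) *
          (∏ k, (x - η k) ^ m k) * ∏ k, (x + ϑ k) ^ n k) /
        ((∏ k, (-η k) ^ m k) * (∏ k, ϑ k ^ n k) * x *
          (∏ mm, (x - β mm) ^ M mm) * ∏ nn, (x + γ nn) ^ N nn)) :
    ∑ mm, H0 mm 1 - 1 - ∑ nn, G0 nn 1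
      = -((∏ mm, β mm ^ M mm) * ∏ nn, γ nn ^ N nn) /
          ((∏ k, η k ^ m k) * ∏ k, ϑ k ^ n k) := by
  have hlimH := tendsto_mul_sum_sum_Icc_div_sub_pow_cobounded univ β
    (fun mm i => H0 mm i * (-1) ^ i) hM
  have hlimG := tendsto_mul_sum_sum_Icc_div_sub_pow_cobounded univ (-γ) G0 hN
  simp only [Pi.neg_apply, sub_neg_eq_add] at hlimG
  have hlimInv : Tendsto (fun x : ℂ => x * (1 / x)) (cobounded ℂ) (𝓝 1) :=
    tendsto_const_nhds.congr' <| (eventually_ne_cobounded 0).mono fun _ hx =>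
      (mul_one_div_cancel hx).symm
  have hlimLHS := (hlimH.add hlimG).add hlimInv
  simp only [← mul_add] at hlimLHS
  have hlimRHS := tendsto_mul_mul_div_mul_mul_cobounded
    ((∏ mm, (-β mm) ^ M mm) * ∏ nn, γ nn ^ N nn) ((∏ k, (-η k) ^ m k) * ∏ k, ϑ k ^ n k)
    (tendsto_prod_mul_prod_div_pow_cobounded univ univ η m ϑ n)
    (hdegM ▸ hdegN ▸ tendsto_prod_mul_prod_div_pow_cobounded univ univ β M γ N)
  have hregular :
      ∀ᶠ x in cobounded ℂ, x ≠ 0 ∧ (∀ mm, x ≠ β mm) ∧ ∀ nn, x ≠ -γ nn :=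
    (eventually_ne_cobounded 0).and <|
      (eventually_all.2 fun _ => eventually_ne_cobounded _).and
        (eventually_all.2 fun _ => eventually_ne_cobounded _)
  have hres := tendsto_nhds_unique
    (hlimLHS.congr' <| hregular.mono fun x ⟨h0, hβ, hγ⟩ => by rw [hpf x h0 hβ hγ]; ring)
    hlimRHS
  rw [prod_neg_pow, prod_neg_pow, ← hdegM, mul_assoc, mul_assoc,
    mul_div_mul_left _ _ (pow_ne_zero _ (neg_ne_zero.2 one_ne_zero))] at hres
  simp only [pow_one, mul_neg_one, sum_neg_distrib] at hres
  linear_combination -hres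

/-- The algebraic content of the jump-size identity (3.39): if the coefficients `H⁰`, `G⁰`
satisfy the partial-fraction identity (3.32) for the rational function `f⁰` of (3.33), and
the degrees satisfy `∑ M_m = ∑ m_k` and `∑ N_n = ∑ n_k`, then
`∑ H⁰_{m1} − 1 − ∑ G⁰_{n1} = −∏ β^M ∏ γ^N / (∏ η^m ∏ ϑ^n)`. -/
theorem paper_eq_3_39 (Mp Nm mp nm : ℕ)
    (β : Fin Mp → ℂ) (M : Fin Mp → ℕ)
    (γ : Fin Nm → ℂ) (N : Fin Nm → ℕ)
    (η : Fin mp → ℂ) (m : Fin mp → ℕ)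
    (ϑ : Fin nm → ℂ) (n : Fin nm → ℕ)
    (hβinj : Function.Injective β) (hβre : ∀ k, 0 < (β k).re) (hM : ∀ k, 1 ≤ M k)
    (hγinj : Function.Injective γ) (hγre : ∀ k, 0 < (γ k).re) (hN : ∀ k, 1 ≤ N k)
    (hηinj : Function.Injective η) (hηre : ∀ k, 0 < (η k).re) (hm : ∀ k, 1 ≤ m k)
    (hϑinj : Function.Injective ϑ) (hϑre : ∀ k, 0 < (ϑ k).re) (hn : ∀ k, 1 ≤ n k)
    (hηβ : ∀ k j, η k ≠ β j) (hϑγ : ∀ k j, ϑ k ≠ γ j)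
    (hdegM : ∑ k, M k = ∑ k, m k) (hdegN : ∑ k, N k = ∑ k, n k)
    (H0 : Fin Mp → ℕ → ℂ) (G0 : Fin Nm → ℕ → ℂ)
    (hpf : ∀ x : ℂ, x ≠ 0 → (∀ mm, x ≠ β mm) → (∀ nn, x ≠ -γ nn) →
      ∑ mm, ∑ i ∈ Finset.Icc 1 (M mm), H0 mm i * (-1) ^ i / (x - β mm) ^ i
        + ∑ nn, ∑ i ∈ Finset.Icc 1 (N nn), G0 nn i / (x + γ nn) ^ i
        + 1 / x
      = ((∏ mm, (-β mm) ^ M mm) * (∏ nn, γ nn ^ N nn) *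
          (∏ k, (x - η k) ^ m k) * ∏ k, (x + ϑ k) ^ n k) /
        ((∏ k, (-η k) ^ m k) * (∏ k, ϑ k ^ n k) * x *
          (∏ mm, (x - β mm) ^ M mm) * ∏ nn, (x + γ nn) ^ N nn)) :
    ∑ mm, H0 mm 1 - 1 - ∑ nn, G0 nn 1
      = -((∏ mm, β mm ^ M mm) * ∏ nn, γ nn ^ N nn) /
          ((∏ k, η k ^ m k) * ∏ k, ϑ k ^ n k) :=
  paper_eq_3_39_general Mp Nm mp nm β M γ N η m ϑ n hM hN hdegM hdegN H0 G0 hpf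
end

section
/- Let γ₁,…,γ_K be pairwise distinct complex numbers with positive real parts, with multiplicities N₁,…,N_K ≥ 1, and let D₀ ∈ ℂ and D_{kj} ∈ ℂ (1 ≤ k ≤ K, 1 ≤ j ≤ N_k). Define ψ⁻(s) = D₀ + ∑_{k=1}^{K} ∑_{j=1}^{N_k} D_{kj}/(s+γ_k)^j for s ∈ ℂ with Re(s) ≥ 0. Let θ, s ∈ ℂ with Re(θ) > 0, Re(s) ≥ 0, s ≠ θ, and ψ⁻(s) ≠ 0. Then the function x ↦ e^{θx}·(1/ψ⁻(s))·∑_{k=1}^{K} ∑_{j=1}^{N_k} D_{kj}·((−1)^{j−1}/(j−1)!)·iteratedDeriv (j−1) (g ↦ e^{gx}/(s+g)) (γ_k) is integrable on (−∞,0) and ∫_{−∞}^0 e^{θx}·(1/ψ⁻(s))·∑_{k=1}^{K} ∑_{j=1}^{N_k} D_{kj}·((−1)^{j−1}/(j−1)!)·iteratedDeriv (j−1) (g ↦ e^{gx}/(s+g)) (γ_k) dx = (1/(s−θ))·(ψ⁻(θ)/ψ⁻(s) − 1). -/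
/-!
Leibniz's rule writes `(-1)^m/m! · ∂_γ^m [e^{γx}/(s+γ)]` as
`∑_{i ≤ m} (-x)^i/i! · e^{γx}/(s+γ)^(m-i+1)`. Against `e^{θx}` on `(-∞, 0]` the monomial
`(-x)^i e^{(θ+γ)x}` integrates to `i!/(θ+γ)^(i+1)`, so the `m`-th summand has Laplace transform
`∑_{i ≤ m} (θ+γ)^{-(i+1)} (s+γ)^{-(m-i+1)}`, a geometric sum equal to
`((θ+γ)^{-(m+1)} - (s+γ)^{-(m+1)})/(s-θ)`. Weighted by `D_{kj}` (with `m = j-1`) these add up to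
`(ψ⁻(θ) - ψ⁻(s))/(s-θ)`.
-/

open MeasureTheory Complex Finset Set Filter Topology Nat

lemma norm_neg_pow_mul_cexp_le {b : ℂ} (hb : 0 < b.re) (n : ℕ) {x : ℝ} (hx : x ≤ 0) :
    ‖(-(x : ℂ)) ^ n * cexp (b * x)‖ ≤ n ! * (2 / b.re) ^ n * Real.exp (b.re / 2 * x) := by
  have hpow : |x| ^ n ≤ n ! * (2 / b.re) ^ n * Real.exp (-(b.re / 2 * x)) := by
    have h := Real.pow_div_factorial_le_exp (x := b.re / 2 * |x|) (by positivity) n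
    rw [div_le_iff₀ (by positivity), abs_of_nonpos hx] at h
    rw [abs_of_nonpos hx]
    calc (-x) ^ n = (2 / b.re) ^ n * (b.re / 2 * -x) ^ n := by
          rw [← mul_pow]; field_simp
      _ ≤ (2 / b.re) ^ n * (Real.exp (b.re / 2 * -x) * n !) := by gcongr
      _ = _ := by rw [mul_neg]; ring
  have hexp : Real.exp (-(b.re / 2 * x)) * Real.exp (b.re * x) = Real.exp (b.re / 2 * x) := by
    rw [← Real.exp_add]; ring_nf
  calc ‖(-(x : ℂ)) ^ n * cexp (b * x)‖ = |x| ^ n * Real.exp (b.re * x) := by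
        simp [norm_exp, Complex.mul_re]
    _ ≤ n ! * (2 / b.re) ^ n * Real.exp (-(b.re / 2 * x)) * Real.exp (b.re * x) := by gcongr
    _ = _ := by rw [mul_assoc, hexp]

lemma integrableOn_Iic_neg_pow_mul_cexp {b : ℂ} (hb : 0 < b.re) (n : ℕ) :
    IntegrableOn (fun x : ℝ => (-(x : ℂ)) ^ n * cexp (b * x)) (Iic 0) := by
  refine Integrable.mono' ((integrableOn_exp_mul_Iic (half_pos hb) 0).const_mul
    ((n ! : ℝ) * (2 / b.re) ^ n)) (by fun_prop) ?_
  filter_upwards [ae_restrict_mem measurableSet_Iic] with x hx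
  exact norm_neg_pow_mul_cexp_le hb n hx

lemma tendsto_neg_pow_mul_cexp_atBot {b : ℂ} (hb : 0 < b.re) (n : ℕ) :
    Tendsto (fun x : ℝ => (-(x : ℂ)) ^ n * cexp (b * x)) atBot (𝓝 0) := by
  have hlim : Tendsto (fun x : ℝ => n ! * (2 / b.re) ^ n * Real.exp (b.re / 2 * x))
      atBot (𝓝 0) := by
    simpa using ((Real.tendsto_exp_atBot.comp
      (tendsto_id.const_mul_atBot (half_pos hb))).const_mul ((n ! : ℝ) * (2 / b.re) ^ n))
  refine squeeze_zero_norm' ?_ hlim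
  filter_upwards [eventually_le_atBot 0] with x hx
  exact norm_neg_pow_mul_cexp_le hb n hx

lemma hasDerivAt_neg_pow_succ_mul_cexp (b : ℂ) (n : ℕ) (x : ℝ) :
    HasDerivAt (fun x : ℝ => (-(x : ℂ)) ^ (n + 1) * cexp (b * x))
      (b * ((-(x : ℂ)) ^ (n + 1) * cexp (b * x)) - (n + 1) * ((-(x : ℂ)) ^ n * cexp (b * x)))
      x := by
  have h1 : HasDerivAt (fun z : ℂ => (-z) ^ (n + 1)) (-((n + 1) * (-(x : ℂ)) ^ n)) x := by
    simpa using (hasDerivAt_id' (x : ℂ)).neg.fun_pow (n + 1)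
  have h2 : HasDerivAt (fun z : ℂ => cexp (b * z)) (b * cexp (b * x)) x := by
    simpa [mul_comm] using ((hasDerivAt_id (x : ℂ)).const_mul b).cexp
  convert (h1.fun_mul h2).comp_ofReal using 1
  ring

lemma integral_Iic_neg_pow_mul_cexp {b : ℂ} (hb : 0 < b.re) (n : ℕ) :
    ∫ x in Iic (0 : ℝ), (-(x : ℂ)) ^ n * cexp (b * x) = n ! / b ^ (n + 1) := by
  have hb0 : b ≠ 0 := fun h => by simp [h] at hb
  induction n with
  | zero => simpa using integral_exp_mul_complex_Iic hb 0
  | succ n ih =>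
    have hint := fun m => integrableOn_Iic_neg_pow_mul_cexp hb m
    -- integration by parts: `b I_{n+1} - (n+1) I_n = [(-x)^{n+1} e^{bx}]_{-∞}^0 = 0`
    have hFTC := integral_Iic_of_hasDerivAt_of_tendsto'
      (fun x _ => hasDerivAt_neg_pow_succ_mul_cexp b n x)
      (((hint (n + 1)).const_mul b).sub ((hint n).const_mul _))
      (tendsto_neg_pow_mul_cexp_atBot hb (n + 1))
    rw [integral_sub ((hint (n + 1)).const_mul b) ((hint n).const_mul _),
      integral_const_mul, integral_const_mul, ih] at hFTC
    simp only [ofReal_zero, neg_zero, ne_eq, Nat.add_eq_zero_iff, one_ne_zero, and_false,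
      not_false_eq_true, zero_pow, zero_mul, sub_zero] at hFTC
    set I := ∫ x in Iic (0 : ℝ), (-(x : ℂ)) ^ (n + 1) * cexp (b * x)
    field_simp at hFTC
    rw [eq_div_iff (pow_ne_zero _ hb0)]
    push_cast [factorial_succ]
    linear_combination hFTC

lemma iteratedDeriv_inv_const_add (s γ : ℂ) (k : ℕ) :
    iteratedDeriv k (fun g : ℂ => (s + g)⁻¹) γ = (-1) ^ k * k ! / (s + γ) ^ (k + 1) := by
  rw [iteratedDeriv_comp_const_add k Inv.inv s]
  dsimp only
  rw [iteratedDeriv_eq_iterate, iter_deriv_inv,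
    show (-1 - k : ℤ) = -((k + 1 : ℕ) : ℤ) by push_cast; ring, zpow_neg, zpow_natCast,
    div_eq_mul_inv]

lemma iteratedDeriv_cexp_mul_div (x : ℂ) {s γ : ℂ} (h : s + γ ≠ 0) (m : ℕ) :
    iteratedDeriv m (fun g => cexp (g * x) / (s + g)) γ = ∑ i ∈ range (m + 1),
      m.choose i * (x ^ i * cexp (x * γ)) *
        ((-1) ^ (m - i) * (m - i)! / (s + γ) ^ (m - i + 1)) := by
  have hfun : (fun g => cexp (g * x) / (s + g)) = fun g => cexp (x * g) * (s + g)⁻¹ := by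
    funext g; rw [mul_comm, div_eq_mul_inv]
  have hinv : ContDiffAt ℂ m (fun g : ℂ => (s + g)⁻¹) γ :=
    (contDiffAt_inv ℂ h).comp γ (contDiffAt_const.add contDiffAt_id)
  rw [hfun, iteratedDeriv_fun_mul (by fun_prop) hinv]
  simp only [iteratedDeriv_cexp_const_mul, iteratedDeriv_inv_const_add]

lemma neg_one_pow_div_factorial_mul_iteratedDeriv_cexp_mul_div (x : ℂ) {s γ : ℂ}
    (h : s + γ ≠ 0) (m : ℕ) :
    (-1) ^ m / m ! * iteratedDeriv m (fun g => cexp (g * x) / (s + g)) γ =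
      ∑ i ∈ range (m + 1), (-x) ^ i / i ! * cexp (γ * x) / (s + γ) ^ (m - i + 1) := by
  rw [iteratedDeriv_cexp_mul_div x h, mul_sum]
  refine sum_congr rfl fun i hi => ?_
  obtain ⟨k, rfl⟩ := Nat.exists_eq_add_of_le (Nat.lt_succ_iff.mp (mem_range.mp hi))
  have hfact : ((i + k)! : ℂ) = (i + k).choose i * i ! * k ! := by
    exact_mod_cast (Nat.choose_symm_add ▸ Nat.add_choose_mul_factorial_mul_factorial i k).symm
  have hchoose : ((i + k).choose i : ℂ) ≠ 0 :=
    Nat.cast_ne_zero.mpr (Nat.choose_pos (by omega)).ne'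
  have hk : (k ! : ℂ) ≠ 0 := Nat.cast_ne_zero.mpr (factorial_ne_zero k)
  have hsign : (-1 : ℂ) ^ (i + k) * (-1) ^ k = (-1) ^ i := by
    rw [pow_add, mul_assoc, ← pow_add, Even.neg_one_pow ⟨k, rfl⟩, mul_one]
  rw [Nat.add_sub_cancel_left, hfact, neg_pow x]
  field_simp
  rw [mul_right_comm, hsign, mul_comm]

lemma sum_range_inv_pow_mul_inv_pow {K : Type*} [Field K] {a b : K} (ha : a ≠ 0) (hb : b ≠ 0)
    (hab : a ≠ b) (m : ℕ) :
    ∑ i ∈ range (m + 1), (b ^ (i + 1))⁻¹ * (a ^ (m - i + 1))⁻¹ =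
      ((b ^ (m + 1))⁻¹ - (a ^ (m + 1))⁻¹) / (a - b) := by
  have hinv : b⁻¹ ≠ a⁻¹ := fun h => hab (inv_injective h).symm
  have hgeom := (Commute.all b⁻¹ a⁻¹).geom_sum₂ hinv (m + 1)
  simp only [Nat.add_sub_cancel, ← inv_pow] at hgeom ⊢
  calc ∑ i ∈ range (m + 1), b⁻¹ ^ (i + 1) * a⁻¹ ^ (m - i + 1)
      = b⁻¹ * a⁻¹ * ∑ i ∈ range (m + 1), b⁻¹ ^ i * a⁻¹ ^ (m - i) := by
        rw [mul_sum]; exact sum_congr rfl fun i _ => by ring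
    _ = _ := by
        rw [hgeom, inv_sub_inv hb ha]
        field_simp

section

variable {α ι κ 𝕜 : Type*} [MeasurableSpace α] {μ : Measure α} [RCLike 𝕜]
  {s : Finset ι} {t : ι → Finset κ} {f : ι → κ → α → 𝕜}

lemma integrable_sum_sum_const_mul (c : ι → κ → 𝕜)
    (hf : ∀ i ∈ s, ∀ j ∈ t i, Integrable (f i j) μ) :
    Integrable (fun x => ∑ i ∈ s, ∑ j ∈ t i, c i j * f i j x) μ :=
  integrable_finsetSum _ fun i hi => integrable_finsetSum _ fun j hj => (hf i hi j hj).const_mul _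

lemma integral_sum_sum_const_mul (c : ι → κ → 𝕜)
    (hf : ∀ i ∈ s, ∀ j ∈ t i, Integrable (f i j) μ) :
    ∫ x, ∑ i ∈ s, ∑ j ∈ t i, c i j * f i j x ∂μ =
      ∑ i ∈ s, ∑ j ∈ t i, c i j * ∫ x, f i j x ∂μ := by
  rw [integral_finsetSum _ fun i hi =>
    integrable_finsetSum _ fun j hj => (hf i hi j hj).const_mul _]
  refine sum_congr rfl fun i hi => ?_
  rw [integral_finsetSum _ fun j hj => (hf i hi j hj).const_mul _]
  simp only [integral_const_mul]

end

section

variable {θ s γ : ℂ}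

lemma cexp_mul_neg_one_pow_div_factorial_mul_iteratedDeriv (hsγ : s + γ ≠ 0) (m : ℕ)
    (x : ℝ) :
    cexp (θ * x) * ((-1) ^ m / m ! * iteratedDeriv m (fun g => cexp (g * x) / (s + g)) γ) =
      ∑ i ∈ range (m + 1),
        (i ! * (s + γ) ^ (m - i + 1))⁻¹ * ((-(x : ℂ)) ^ i * cexp ((θ + γ) * x)) := by
  rw [neg_one_pow_div_factorial_mul_iteratedDeriv_cexp_mul_div _ hsγ, mul_sum]
  refine sum_congr rfl fun i _ => ?_
  rw [add_mul, Complex.exp_add]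
  field_simp

lemma integrableOn_Iio_cexp_mul_iteratedDeriv (hθγ : 0 < (θ + γ).re) (hsγ : s + γ ≠ 0)
    (m : ℕ) :
    IntegrableOn (fun x : ℝ => cexp (θ * x) *
      ((-1) ^ m / m ! * iteratedDeriv m (fun g => cexp (g * x) / (s + g)) γ)) (Iio 0) := by
  simp only [cexp_mul_neg_one_pow_div_factorial_mul_iteratedDeriv hsγ]
  exact integrable_finsetSum _ fun i _ =>
    ((integrableOn_Iic_neg_pow_mul_cexp hθγ i).mono_set Iio_subset_Iic_self).const_mul _

lemma integral_Iio_cexp_mul_iteratedDeriv (hθγ : 0 < (θ + γ).re) (hsγ : s + γ ≠ 0)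
    (hsθ : s ≠ θ) (m : ℕ) :
    ∫ x in Iio (0 : ℝ), cexp (θ * x) *
      ((-1) ^ m / m ! * iteratedDeriv m (fun g => cexp (g * x) / (s + g)) γ) =
      (((θ + γ) ^ (m + 1))⁻¹ - ((s + γ) ^ (m + 1))⁻¹) / (s - θ) := by
  have hθγ0 : θ + γ ≠ 0 := fun h => by simp [h] at hθγ
  simp only [cexp_mul_neg_one_pow_div_factorial_mul_iteratedDeriv hsγ]
  rw [← integral_Iic_eq_integral_Iio, integral_finsetSum _ fun i _ =>
    (integrableOn_Iic_neg_pow_mul_cexp hθγ i).const_mul _]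
  simp only [integral_const_mul, integral_Iic_neg_pow_mul_cexp hθγ]
  have hi : ∀ i : ℕ, ((i ! : ℂ) * (s + γ) ^ (m - i + 1))⁻¹ * (i ! / (θ + γ) ^ (i + 1)) =
      ((θ + γ) ^ (i + 1))⁻¹ * ((s + γ) ^ (m - i + 1))⁻¹ := fun i => by
    have : (i ! : ℂ) ≠ 0 := Nat.cast_ne_zero.mpr (factorial_ne_zero i)
    field_simp
  simp only [hi]
  rw [sum_range_inv_pow_mul_inv_pow hsγ hθγ0 (fun h => hsθ (add_right_cancel h)),
    add_sub_add_right_eq_sub]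

end

theorem paper_eq_2_34_general (K : ℕ) (γ : Fin K → ℂ)
    (hγre : ∀ k, 0 < (γ k).re)
    (N : Fin K → ℕ)
    (D0 : ℂ) (D : Fin K → ℕ → ℂ) (ψm : ℂ → ℂ)
    (hψm : ∀ s : ℂ, 0 ≤ s.re →
      ψm s = D0 + ∑ k, ∑ j ∈ Finset.Icc 1 (N k), D k j / (s + γ k) ^ j)
    (θ s : ℂ) (hθ : 0 < θ.re) (hs : 0 ≤ s.re) (hsθ : s ≠ θ) (hψs : ψm s ≠ 0) :
    MeasureTheory.IntegrableOn
      (fun x : ℝ => Complex.exp (θ * x) * (1 / ψm s) *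
        ∑ k, ∑ j ∈ Finset.Icc 1 (N k),
          D k j * ((-1) ^ (j - 1) / (Nat.factorial (j - 1) : ℂ)) *
            iteratedDeriv (j - 1) (fun g : ℂ => Complex.exp (g * x) / (s + g)) (γ k))
      (Set.Iio 0) ∧
    ∫ x : ℝ in Set.Iio 0, Complex.exp (θ * x) * (1 / ψm s) *
        ∑ k, ∑ j ∈ Finset.Icc 1 (N k),
          D k j * ((-1) ^ (j - 1) / (Nat.factorial (j - 1) : ℂ)) *
            iteratedDeriv (j - 1) (fun g : ℂ => Complex.exp (g * x) / (s + g)) (γ k)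
      = (1 / (s - θ)) * (ψm θ / ψm s - 1) := by
  have hθγ : ∀ k, 0 < (θ + γ k).re := fun k => by simp only [add_re]; linarith [hγre k]
  have hsγ : ∀ k, s + γ k ≠ 0 := fun k h => by
    have := congrArg re h; simp only [add_re, zero_re] at this; linarith [hγre k]
  set L : Fin K → ℕ → ℝ → ℂ := fun k j x => cexp (θ * x) *
    ((-1) ^ (j - 1) / (j - 1)! * iteratedDeriv (j - 1) (fun g => cexp (g * x) / (s + g)) (γ k))
  have hL : ∀ k ∈ Finset.univ, ∀ j ∈ Finset.Icc 1 (N k), IntegrableOn (L k j) (Iio 0) :=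
    fun k _ j _ => integrableOn_Iio_cexp_mul_iteratedDeriv (hθγ k) (hsγ k) (j - 1)
  have hfun : (fun x : ℝ => cexp (θ * x) * (1 / ψm s) * ∑ k, ∑ j ∈ Finset.Icc 1 (N k),
      D k j * ((-1) ^ (j - 1) / ((j - 1)! : ℂ)) *
        iteratedDeriv (j - 1) (fun g : ℂ => cexp (g * x) / (s + g)) (γ k)) =
      fun x => ∑ k, ∑ j ∈ Finset.Icc 1 (N k), D k j / ψm s * L k j x := by
    funext x
    simp only [L, mul_sum]
    exact sum_congr rfl fun k _ => sum_congr rfl fun j _ => by ring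
  rw [hfun]
  refine ⟨integrable_sum_sum_const_mul _ hL, ?_⟩
  calc ∫ x in Iio 0, ∑ k, ∑ j ∈ Finset.Icc 1 (N k), D k j / ψm s * L k j x
      = ∑ k, ∑ j ∈ Finset.Icc 1 (N k),
          D k j * (((θ + γ k) ^ j)⁻¹ - ((s + γ k) ^ j)⁻¹) / (ψm s * (s - θ)) := by
        rw [integral_sum_sum_const_mul _ hL]
        refine sum_congr rfl fun k _ => sum_congr rfl fun j hj => ?_
        rw [integral_Iio_cexp_mul_iteratedDeriv (hθγ k) (hsγ k) hsθ,
          Nat.sub_add_cancel (Finset.mem_Icc.mp hj).1]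
        exact div_mul_div_comm _ _ _ _
    _ = (ψm θ - ψm s) / (ψm s * (s - θ)) := by
        simp only [hψm θ hθ.le, hψm s hs, add_sub_add_left_eq_sub, ← sum_sub_distrib, sum_div]
        exact sum_congr rfl fun k _ => sum_congr rfl fun j _ => by ring
    _ = 1 / (s - θ) * (ψm θ / ψm s - 1) := by
        field_simp [sub_ne_zero.mpr hsθ]

/-- Analytic core of formula (2.34) in Lemma 2.5: the Laplace transform in `x` over the
negative half-line of the undershoot-density expansion equals `(ψ⁻(θ)/ψ⁻(s) − 1)/(s − θ)`,
where `ψ⁻(s) = D₀ + ∑_{k,j} D_{kj}/(s+γ_k)^j`. -/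
theorem paper_eq_2_34 (K : ℕ) (γ : Fin K → ℂ)
    (hγinj : Function.Injective γ) (hγre : ∀ k, 0 < (γ k).re)
    (N : Fin K → ℕ) (hN : ∀ k, 1 ≤ N k)
    (D0 : ℂ) (D : Fin K → ℕ → ℂ) (ψm : ℂ → ℂ)
    (hψm : ∀ s : ℂ, 0 ≤ s.re →
      ψm s = D0 + ∑ k, ∑ j ∈ Finset.Icc 1 (N k), D k j / (s + γ k) ^ j)
    (θ s : ℂ) (hθ : 0 < θ.re) (hs : 0 ≤ s.re) (hsθ : s ≠ θ) (hψs : ψm s ≠ 0) :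
    MeasureTheory.IntegrableOn
      (fun x : ℝ => Complex.exp (θ * x) * (1 / ψm s) *
        ∑ k, ∑ j ∈ Finset.Icc 1 (N k),
          D k j * ((-1) ^ (j - 1) / (Nat.factorial (j - 1) : ℂ)) *
            iteratedDeriv (j - 1) (fun g : ℂ => Complex.exp (g * x) / (s + g)) (γ k))
      (Set.Iio 0) ∧
    ∫ x : ℝ in Set.Iio 0, Complex.exp (θ * x) * (1 / ψm s) *
        ∑ k, ∑ j ∈ Finset.Icc 1 (N k),
          D k j * ((-1) ^ (j - 1) / (Nat.factorial (j - 1) : ℂ)) *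
            iteratedDeriv (j - 1) (fun g : ℂ => Complex.exp (g * x) / (s + g)) (γ k)
      = (1 / (s - θ)) * (ψm θ / ψm s - 1) :=
  paper_eq_2_34_general K γ hγre N D0 D ψm hψm θ s hθ hs hsθ hψs
end
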